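/- Let α₁, …, α_K be independent random variables with α_k ~ Bernoulli(p_k), p_k ∈ (0,1), and let R be a binary response whose conditional success probability f(α) := P(R = 1 | α) depends only on α₁, …, α_{K*}. If f is strictly monotone in each required coordinate, i.e. f(α₁,…,α_{k−1},1,α_{k+1},…,α_{K*}) > f(α₁,…,α_{k−1},0,α_{k+1},…,α_{K*}) for all k ≤ K* and all values of the other coordinates, then in the population least-squares linear regression of R on (1, α₁, …, α_K), the coefficient β_k is strictly positive for every k ≤ K* and equals 0 for every k > K*. -/

import Mathlib

open MeasureTheory ProbabilityTheory

lemma gdina_quad_zero (A B : ℝ) (h : ∀ t : ℝ, 0 ≤ A * t ^ 2 + B * t) : B = 0 := by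
  have key : ∀ t : ℝ, 0 < t → |B| ≤ A * t := by
    intro t ht
    have h1 := h t
    have h2 := h (-t)
    rw [abs_le]
    constructor <;> nlinarith
  have hA : 0 ≤ A := by nlinarith [h 1, h (-1)]
  rcases hA.eq_or_lt with hA0 | hApos
  · have := key 1 one_pos
    rw [← hA0] at this
    simpa using abs_nonpos_iff.mp (by linarith)
  · by_contra hB
    have hb : 0 < |B| := abs_pos.mpr hB
    have h1 := key (|B| / (2 * A)) (by positivity)
    have h2 : A * (|B| / (2 * A)) = |B| / 2 := by field_simp
    rw [h2] at h1
    linarith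

lemma gdina_integrable_of_bound {Ω : Type*} [MeasurableSpace Ω] {μ : Measure Ω}
    [IsFiniteMeasure μ] {h : Ω → ℝ} (hm : AEStronglyMeasurable h μ) (C : ℝ)
    (hC : ∀ ω, |h ω| ≤ C) : Integrable h μ :=
  Integrable.mono' (integrable_const C) hm
    (Filter.Eventually.of_forall fun ω => by simpa [Real.norm_eq_abs] using hC ω)

lemma gdina_comap_comp_le {Ω E : Type*} [MeasurableSpace E] [MeasurableSingletonClass E]
    (φ : Ω → E) {F : Set E} (hF : F.Finite) (hrange : ∀ ω, φ ω ∈ F) (g : E → ℝ) :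
    MeasurableSpace.comap (fun ω => g (φ ω)) inferInstance
      ≤ MeasurableSpace.comap φ inferInstance := by
  rintro s ⟨B, _hB, rfl⟩
  refine ⟨g ⁻¹' B ∩ F, (hF.subset Set.inter_subset_right).measurableSet, ?_⟩
  ext ω
  simp [hrange ω]

lemma gdina_bound_of_finite_range {Ω E : Type*} [DecidableEq E] (φ : Ω → E) {F : Set E}
    (hF : F.Finite) (hrange : ∀ ω, φ ω ∈ F) (g : E → ℝ) :
    ∃ C : ℝ, ∀ ω, |g (φ ω)| ≤ C := by
  refine ⟨∑ e ∈ hF.toFinset, |g e|, fun ω => ?_⟩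
  exact Finset.single_le_sum (fun i _ => abs_nonneg (g i)) (hF.mem_toFinset.mpr (hrange ω))

lemma gdina_indep_factor {Ω : Type*} [MeasurableSpace Ω] (μ : Measure Ω)
    [IsProbabilityMeasure μ] {K : ℕ} (α : Fin K → Ω → ℝ) (hmeas : ∀ k, Measurable (α k))
    (hval : ∀ k ω, α k ω = 0 ∨ α k ω = 1)
    (hindep : iIndepFun α μ) (k : Fin K)
    (G : (Fin K → ℝ) → ℝ) (hG : ∀ x, G (Function.update x k 0) = G x) :
    Integrable (fun ω => G (fun j => α j ω)) μ ∧
      ∫ ω, α k ω * G (fun j => α j ω) ∂μ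
        = (∫ ω, α k ω ∂μ) * ∫ ω, G (fun j => α j ω) ∂μ := by
  classical
  set T : Finset (Fin K) := {k}ᶜ with hT
  set res : Ω → ({x // x ∈ T} → ℝ) := fun ω i => α i ω with hres
  have hresmeas : Measurable res := measurable_pi_lambda _ fun i => hmeas i
  set W : ({x // x ∈ T} → ℝ) → (Fin K → ℝ) :=
    fun y j => if h : j = k then 0 else y ⟨j, by simp [hT, h]⟩ with hWdef
  have hW : ∀ ω, W (res ω) = Function.update (fun j => α j ω) k 0 := by
    intro ω
    funext j
    by_cases h : j = k
    · subst h; simp [W]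
    · simp [W, res, h, Function.update_of_ne h]
  have hcomp : ∀ ω, G (fun j => α j ω) = (fun y => G (W y)) (res ω) := by
    intro ω
    simp only []
    rw [hW ω, hG]
  have hFfin : (Set.pi Set.univ fun _ : {x // x ∈ T} => ({0, 1} : Set ℝ)).Finite :=
    Set.Finite.pi fun _ => (Set.finite_singleton 1).insert 0
  have hrange : ∀ ω, res ω ∈ Set.pi Set.univ fun _ : {x // x ∈ T} => ({0, 1} : Set ℝ) := by
    intro ω i _
    rcases hval i ω with h | h <;> simp [res, h]
  have h1 : IndepFun (fun a (i : ({k} : Finset (Fin K))) => α i a) res μ :=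
    hindep.indepFun_finset {k} T (by simp [hT]) hmeas
  have h2 : IndepFun (α k) res μ :=
    h1.comp (measurable_pi_apply (⟨k, Finset.mem_singleton_self k⟩ : ({k} : Finset (Fin K))))
      measurable_id
  have hle := gdina_comap_comp_le res hFfin hrange fun y => G (W y)
  have h3 : IndepFun (α k) (fun ω => G (W (res ω))) μ :=
    indep_of_indep_of_le_right h2 hle
  obtain ⟨C, hC⟩ := gdina_bound_of_finite_range res hFfin hrange fun y => G (W y)
  have hGVmeas : Measurable fun ω => G (W (res ω)) :=
    measurable_iff_comap_le.mpr (hle.trans hresmeas.comap_le)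
  have hGI : Integrable (fun ω => G (W (res ω))) μ :=
    gdina_integrable_of_bound hGVmeas.aestronglyMeasurable C hC
  have hαI : Integrable (α k) μ :=
    gdina_integrable_of_bound (hmeas k).aestronglyMeasurable 1
      (fun ω => by rcases hval k ω with h | h <;> simp [h])
  have hmul := IndepFun.integral_mul_eq_mul_integral (μ := μ) h3 hαI.aestronglyMeasurable hGI.aestronglyMeasurable
  have heq : (fun ω => G (fun j => α j ω)) = fun ω => G (W (res ω)) := funext hcomp
  constructor
  · rw [heq]; exact hGI
  · rw [show (fun ω => α k ω * G (fun j => α j ω)) = fun ω => α k ω * G (W (res ω)) by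
      funext ω; rw [hcomp ω]]
    rw [show (∫ ω, G (fun j => α j ω) ∂μ) = ∫ ω, G (W (res ω)) ∂μ by rw [heq]]
    simpa [Pi.mul_apply] using hmul


lemma gdina_condexp_mul {Ω : Type*} [mΩ : MeasurableSpace Ω] (μ : Measure Ω)
    [IsProbabilityMeasure μ] {E : Type*} [MeasurableSpace E] (V : Ω → E) (hV : Measurable V)
    (R : Ω → ℝ) (hRI : Integrable R μ) (g : E → ℝ) (hg : Measurable g) (F : Ω → ℝ)
    (hcond : μ[R | MeasurableSpace.comap V inferInstance] =ᵐ[μ] F)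
    (hgI : Integrable (fun ω => g (V ω) * R ω) μ) :
    ∫ ω, g (V ω) * R ω ∂μ = ∫ ω, g (V ω) * F ω ∂μ := by
  have hm : MeasurableSpace.comap V inferInstance ≤ mΩ := hV.comap_le
  haveI : SigmaFinite (μ.trim hm) := inferInstance
  have hgm : StronglyMeasurable[MeasurableSpace.comap V inferInstance] (fun ω => g (V ω)) :=
    (hg.comp (measurable_iff_comap_le.mpr le_rfl)).stronglyMeasurable
  have hmulI : Integrable ((fun ω => g (V ω)) * R) μ := hgI
  have hpull : μ[(fun ω => g (V ω)) * R | MeasurableSpace.comap V inferInstance]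
      =ᵐ[μ] (fun ω => g (V ω)) * μ[R | MeasurableSpace.comap V inferInstance] :=
    condExp_mul_of_stronglyMeasurable_left hgm hmulI hRI
  calc ∫ ω, g (V ω) * R ω ∂μ
      = ∫ ω, ((fun ω => g (V ω)) * R) ω ∂μ := rfl
    _ = ∫ ω, (μ[(fun ω => g (V ω)) * R | MeasurableSpace.comap V inferInstance]) ω ∂μ :=
        (integral_condExp hm).symm
    _ = ∫ ω, ((fun ω => g (V ω)) * μ[R | MeasurableSpace.comap V inferInstance]) ω ∂μ :=
        integral_congr_ae hpull
    _ = ∫ ω, g (V ω) * F ω ∂μ := by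
        refine integral_congr_ae (hcond.mono fun ω h => ?_)
        simp only [Pi.mul_apply, h]

/-- GDINA-type model: monotone dependence on the required attributes implies
strictly positive regression coefficients for the required attributes and zero coefficients
for the non-required ones, in the mis-specified linear regression. -/
theorem gdina_linear_regression_selection
    {Ω : Type*} [MeasurableSpace Ω] (μ : Measure Ω) [IsProbabilityMeasure μ]
    (K Kstar : ℕ) (hKstar : 1 ≤ Kstar) (hK : Kstar ≤ K)
    (p : Fin K → ℝ) (hp : ∀ k, p k ∈ Set.Ioo (0 : ℝ) 1)
    (α : Fin K → Ω → ℝ) (hmeas : ∀ k, Measurable (α k))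
    (hval : ∀ k ω, α k ω = 0 ∨ α k ω = 1)
    (hmean : ∀ k, ∫ ω, α k ω ∂μ = p k)
    (hindep : iIndepFun α μ)
    (R : Ω → ℝ) (hRval : ∀ ω, R ω = 0 ∨ R ω = 1) (hRmeas : Measurable R)
    (f : (Fin K → ℝ) → ℝ)
    -- f depends only on the first Kstar coordinates
    (hdep : ∀ x y : Fin K → ℝ, (∀ k : Fin K, (k : ℕ) < Kstar → x k = y k) → f x = f y)
    -- strict monotonicity in each required coordinate
    (hmono : ∀ k : Fin K, (k : ℕ) < Kstar → ∀ x : Fin K → ℝ,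
      (∀ i, x i = 0 ∨ x i = 1) →
      f (Function.update x k 1) > f (Function.update x k 0))
    -- the conditional success probability of R given α is f(α)
    (hcond : μ[R | MeasurableSpace.comap (fun ω => fun k => α k ω)
        (inferInstance : MeasurableSpace (Fin K → ℝ))]
      =ᵐ[μ] fun ω => f (fun k => α k ω))
    (β₀ : ℝ) (β : Fin K → ℝ)
    (hmin : ∀ (b₀ : ℝ) (b : Fin K → ℝ),
      ∫ ω, (R ω - β₀ - ∑ k, β k * α k ω) ^ 2 ∂μ
        ≤ ∫ ω, (R ω - b₀ - ∑ k, b k * α k ω) ^ 2 ∂μ) :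
    (∀ k : Fin K, (k : ℕ) < Kstar → 0 < β k) ∧
    (∀ k : Fin K, Kstar ≤ (k : ℕ) → β k = 0) := by
  classical
  -- basic bounds and integrability
  have hαbd : ∀ k ω, |α k ω| ≤ 1 := fun k ω => by rcases hval k ω with h | h <;> simp [h]
  have hRbd : ∀ ω, |R ω| ≤ 1 := fun ω => by rcases hRval ω with h | h <;> simp [h]
  have hαI : ∀ k, Integrable (α k) μ := fun k =>
    gdina_integrable_of_bound (hmeas k).aestronglyMeasurable 1 (hαbd k)
  have hRI : Integrable R μ := gdina_integrable_of_bound hRmeas.aestronglyMeasurable 1 hRbd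
  have hαRI : ∀ k, Integrable (fun ω => α k ω * R ω) μ := fun k =>
    gdina_integrable_of_bound ((hmeas k).mul hRmeas).aestronglyMeasurable 1
      (fun ω => by rw [abs_mul]
                   exact mul_le_one₀ (hαbd k ω) (abs_nonneg _) (hRbd ω))
  have hααI : ∀ j k, Integrable (fun ω => α j ω * α k ω) μ := fun j k =>
    gdina_integrable_of_bound ((hmeas j).mul (hmeas k)).aestronglyMeasurable 1
      (fun ω => by rw [abs_mul]
                   exact mul_le_one₀ (hαbd j ω) (abs_nonneg _) (hαbd k ω))
  -- the residual
  set e : Ω → ℝ := fun ω => R ω - β₀ - ∑ j, β j * α j ω with hedef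
  set Ce : ℝ := 1 + |β₀| + ∑ j, |β j| with hCedef
  have hebd : ∀ ω, |e ω| ≤ Ce := by
    intro ω
    have hSb : |∑ j, β j * α j ω| ≤ ∑ j, |β j| :=
      (Finset.abs_sum_le_sum_abs _ _).trans (Finset.sum_le_sum fun j _ => by
        rw [abs_mul]; exact mul_le_of_le_one_right (abs_nonneg _) (hαbd j ω))
    have hS := abs_le.mp hSb
    have hR' := abs_le.mp (hRbd ω)
    rw [abs_le]
    constructor <;>
      · simp only [hedef, hCedef]
        nlinarith [le_abs_self β₀, neg_abs_le β₀]
  have hemeas : Measurable e :=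
    (hRmeas.sub measurable_const).sub
      (Finset.measurable_sum Finset.univ fun j _ => (measurable_const.mul (hmeas j)))
  have hCe0 : 0 ≤ Ce := by rw [hCedef]; positivity
  -- generic normal equation
  have hNE : ∀ g : Ω → ℝ, Measurable g → (∀ ω, |g ω| ≤ 1) →
      (∀ t : ℝ, ∃ (b₀ : ℝ) (b : Fin K → ℝ), ∀ ω,
        R ω - b₀ - ∑ j, b j * α j ω = e ω - t * g ω) →
      ∫ ω, e ω * g ω ∂μ = 0 := by
    intro g hg hgb hex
    have hIe2 : Integrable (fun ω => e ω ^ 2) μ :=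
      gdina_integrable_of_bound (hemeas.pow_const 2).aestronglyMeasurable (Ce ^ 2)
        (fun ω => by
          rw [abs_pow]
          exact pow_le_pow_left₀ (abs_nonneg _) (hebd ω) 2)
    have hIg2 : Integrable (fun ω => g ω ^ 2) μ :=
      gdina_integrable_of_bound (hg.pow_const 2).aestronglyMeasurable 1
        (fun ω => by
          rw [abs_pow]
          exact pow_le_one₀ (abs_nonneg _) (hgb ω))
    have hIeg : Integrable (fun ω => e ω * g ω) μ :=
      gdina_integrable_of_bound (hemeas.mul hg).aestronglyMeasurable Ce
        (fun ω => by
          rw [abs_mul]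
          calc |e ω| * |g ω| ≤ Ce * 1 :=
            mul_le_mul (hebd ω) (hgb ω) (abs_nonneg _) hCe0
          _ = Ce := mul_one Ce)
    have key : ∀ t : ℝ, 0 ≤ (∫ ω, g ω ^ 2 ∂μ) * t ^ 2 +
        (-(2 * ∫ ω, e ω * g ω ∂μ)) * t := by
      intro t
      obtain ⟨b₀, b, hb⟩ := hex t
      have h1 := hmin b₀ b
      have hptt : ∀ ω, (R ω - b₀ - ∑ j, b j * α j ω) ^ 2
          = e ω ^ 2 + (t ^ 2 * g ω ^ 2 + (-(2 * t)) * (e ω * g ω)) := fun ω => by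
        rw [hb ω]; ring
      have ia : Integrable (fun ω => t ^ 2 * g ω ^ 2) μ := hIg2.const_mul _
      have ib : Integrable (fun ω => (-(2 * t)) * (e ω * g ω)) μ := hIeg.const_mul _
      have iab : Integrable (fun ω => t ^ 2 * g ω ^ 2 + (-(2 * t)) * (e ω * g ω)) μ := ia.add ib
      have i1 : ∫ ω, (R ω - b₀ - ∑ j, b j * α j ω) ^ 2 ∂μ
          = ∫ ω, (e ω ^ 2 + (t ^ 2 * g ω ^ 2 + (-(2 * t)) * (e ω * g ω))) ∂μ :=
        integral_congr_ae (Filter.Eventually.of_forall hptt)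
      have i2 : ∫ ω, (e ω ^ 2 + (t ^ 2 * g ω ^ 2 + (-(2 * t)) * (e ω * g ω))) ∂μ
          = (∫ ω, e ω ^ 2 ∂μ)
            + ((∫ ω, t ^ 2 * g ω ^ 2 ∂μ) + ∫ ω, (-(2 * t)) * (e ω * g ω) ∂μ) := by
        rw [integral_add hIe2 iab, integral_add ia ib]
      have i3 : ∫ ω, t ^ 2 * g ω ^ 2 ∂μ = t ^ 2 * ∫ ω, g ω ^ 2 ∂μ := integral_const_mul _ _
      have i4 : ∫ ω, (-(2 * t)) * (e ω * g ω) ∂μ = (-(2 * t)) * ∫ ω, e ω * g ω ∂μ :=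
        integral_const_mul _ _
      have h2 : ∫ ω, (R ω - β₀ - ∑ j, β j * α j ω) ^ 2 ∂μ = ∫ ω, e ω ^ 2 ∂μ := by
        rw [hedef]
      rw [h2, i1, i2, i3, i4] at h1
      nlinarith [h1]
    have := gdina_quad_zero _ _ key
    linarith
  -- the two normal equations
  have hE0 : ∫ ω, e ω ∂μ = 0 := by
    have h := hNE (fun _ => 1) measurable_const (by simp)
      (fun t => ⟨β₀ + t, β, fun ω => by simp only [hedef]; ring⟩)
    simpa using h
  have hEk : ∀ k, ∫ ω, e ω * α k ω ∂μ = 0 := by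
    intro k
    refine hNE (α k) (hmeas k) (hαbd k) (fun t => ⟨β₀, Function.update β k (β k + t), fun ω => ?_⟩)
    have hsplit : ∀ c : Fin K → ℝ,
        ∑ j, c j * α j ω = c k * α k ω + ∑ j ∈ Finset.univ.erase k, c j * α j ω :=
      fun c => (Finset.add_sum_erase _ _ (Finset.mem_univ k)).symm
    have herase : ∑ j ∈ Finset.univ.erase k, Function.update β k (β k + t) j * α j ω
        = ∑ j ∈ Finset.univ.erase k, β j * α j ω :=
      Finset.sum_congr rfl fun j hj => by
        rw [Function.update_of_ne (Finset.ne_of_mem_erase hj)]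
    simp only [hedef]
    rw [hsplit (Function.update β k (β k + t)), hsplit β, herase, Function.update_self]
    ring
  -- moments
  have hmkk : ∀ k, ∫ ω, α k ω * α k ω ∂μ = p k := by
    intro k
    rw [show (fun ω => α k ω * α k ω) = fun ω => α k ω from
      funext fun ω => by rcases hval k ω with h | h <;> rw [h] <;> ring]
    exact hmean k
  have hmjk : ∀ j k : Fin K, j ≠ k → ∫ ω, α j ω * α k ω ∂μ = p j * p k := by
    intro j k hjk
    have := (hindep.indepFun hjk).integral_mul_eq_mul_integral (hαI j).aestronglyMeasurable (hαI k).aestronglyMeasurable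
    rw [← hmean j, ← hmean k]
    simpa [Pi.mul_apply] using this
  -- expansion of the normal equations
  have hSI : Integrable (fun ω => ∑ j, β j * α j ω) μ :=
    integrable_finset_sum _ fun j _ => (hαI j).const_mul (β j)
  have hE0' : ∫ ω, R ω ∂μ = β₀ + ∑ j, β j * p j := by
    have hRb : Integrable (fun ω => R ω - β₀) μ := hRI.sub (integrable_const β₀)
    have i1 : ∫ ω, (R ω - β₀ - ∑ j, β j * α j ω) ∂μ
        = (∫ ω, (R ω - β₀) ∂μ) - ∫ ω, (∑ j, β j * α j ω) ∂μ := integral_sub hRb hSI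
    have i2 : ∫ ω, (R ω - β₀) ∂μ = (∫ ω, R ω ∂μ) - ∫ ω, (β₀ : ℝ) ∂μ :=
      integral_sub hRI (integrable_const β₀)
    have i3 : ∫ ω, (β₀ : ℝ) ∂μ = β₀ := by simp
    have i4 : ∫ ω, (∑ j, β j * α j ω) ∂μ = ∑ j, β j * p j := by
      rw [integral_finset_sum _ fun j _ => (hαI j).const_mul (β j)]
      exact Finset.sum_congr rfl fun j _ => by rw [integral_const_mul, hmean j]
    have h := hE0
    simp only [hedef] at h
    rw [i1, i2, i3, i4] at h
    linarith
  have hEk' : ∀ k, ∫ ω, α k ω * R ω ∂μ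
      = β₀ * p k + ∑ j, β j * ∫ ω, α j ω * α k ω ∂μ := by
    intro k
    have hpt : (fun ω => e ω * α k ω) = fun ω =>
        α k ω * R ω - β₀ * α k ω - ∑ j, β j * (α j ω * α k ω) := by
      funext ω
      simp only [hedef]
      rw [sub_mul, sub_mul, Finset.sum_mul]
      have hs : ∑ j, β j * α j ω * α k ω = ∑ j, β j * (α j ω * α k ω) :=
        Finset.sum_congr rfl fun j _ => by ring
      rw [hs]
      ring
    have hi0 : Integrable (fun ω => α k ω * R ω - β₀ * α k ω) μ :=
      (hαRI k).sub ((hαI k).const_mul β₀)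
    have hiS : Integrable (fun ω => ∑ j, β j * (α j ω * α k ω)) μ :=
      integrable_finset_sum _ fun j _ => (hααI j k).const_mul (β j)
    have i1 : ∫ ω, (α k ω * R ω - β₀ * α k ω - ∑ j, β j * (α j ω * α k ω)) ∂μ
        = (∫ ω, (α k ω * R ω - β₀ * α k ω) ∂μ)
          - ∫ ω, (∑ j, β j * (α j ω * α k ω)) ∂μ := integral_sub hi0 hiS
    have i2 : ∫ ω, (α k ω * R ω - β₀ * α k ω) ∂μ
        = (∫ ω, α k ω * R ω ∂μ) - ∫ ω, β₀ * α k ω ∂μ :=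
      integral_sub (hαRI k) ((hαI k).const_mul β₀)
    have i3 : ∫ ω, β₀ * α k ω ∂μ = β₀ * p k := by rw [integral_const_mul, hmean k]
    have i4 : ∫ ω, (∑ j, β j * (α j ω * α k ω)) ∂μ = ∑ j, β j * ∫ ω, α j ω * α k ω ∂μ := by
      rw [integral_finset_sum _ fun j _ => (hααI j k).const_mul (β j)]
      exact Finset.sum_congr rfl fun j _ => by rw [integral_const_mul]
    have h := hEk k
    rw [hpt, i1, i2, i3, i4] at h
    linarith
  -- key algebraic identity: covariance identity for β k
  have hkey : ∀ k : Fin K, (∫ ω, α k ω * R ω ∂μ) - p k * ∫ ω, R ω ∂μ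
      = β k * (p k * (1 - p k)) := by
    intro k
    have hsum1 : ∑ j, β j * ∫ ω, α j ω * α k ω ∂μ
        = β k * p k + ∑ j ∈ Finset.univ.erase k, β j * (p j * p k) := by
      rw [← Finset.add_sum_erase _ (fun j => β j * ∫ ω, α j ω * α k ω ∂μ) (Finset.mem_univ k),
        hmkk k]
      congr 1
      exact Finset.sum_congr rfl fun j hj => by rw [hmjk j k (Finset.ne_of_mem_erase hj)]
    have hsum2 : ∑ j, β j * p j = β k * p k + ∑ j ∈ Finset.univ.erase k, β j * p j :=
      (Finset.add_sum_erase _ (fun j => β j * p j) (Finset.mem_univ k)).symm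
    have hsum3 : ∑ j ∈ Finset.univ.erase k, β j * (p j * p k)
        = p k * ∑ j ∈ Finset.univ.erase k, β j * p j := by
      rw [Finset.mul_sum]
      exact Finset.sum_congr rfl fun j _ => by ring
    rw [hEk' k, hE0', hsum1, hsum2, hsum3]
    ring
  -- conditional expectation step
  have hVmeas : Measurable (fun ω => fun k => α k ω) := measurable_pi_lambda _ hmeas
  have hm : MeasurableSpace.comap (fun ω => fun k => α k ω)
      (inferInstance : MeasurableSpace (Fin K → ℝ)) ≤ ‹MeasurableSpace Ω› := hVmeas.comap_le
  haveI : SigmaFinite (μ.trim hm) := inferInstance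
  have hFfin : (Set.pi Set.univ fun _ : Fin K => ({0, 1} : Set ℝ)).Finite :=
    Set.Finite.pi fun _ => (Set.finite_singleton 1).insert 0
  have hVrange : ∀ ω, (fun k => α k ω) ∈ Set.pi Set.univ fun _ : Fin K => ({0, 1} : Set ℝ) := by
    intro ω i _
    rcases hval i ω with h | h <;> simp [h]
  have hfVmeas : Measurable (fun ω => f (fun k => α k ω)) :=
    measurable_iff_comap_le.mpr
      ((gdina_comap_comp_le (fun ω => fun k => α k ω) hFfin hVrange f).trans hVmeas.comap_le)
  obtain ⟨Cf, hCf⟩ := gdina_bound_of_finite_range (fun ω => fun k => α k ω) hFfin hVrange f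
  have hfVI : Integrable (fun ω => f (fun k => α k ω)) μ :=
    gdina_integrable_of_bound hfVmeas.aestronglyMeasurable Cf hCf
  have hRint : ∫ ω, R ω ∂μ = ∫ ω, f (fun k => α k ω) ∂μ :=
    (integral_condExp hm).symm.trans (integral_congr_ae hcond)
  have hRkint : ∀ k, ∫ ω, α k ω * R ω ∂μ = ∫ ω, α k ω * f (fun j => α j ω) ∂μ := by
    intro k
    exact gdina_condexp_mul μ (fun ω => fun k => α k ω) hVmeas R hRI
      (fun x => x k) (measurable_pi_apply k) (fun ω => f (fun j => α j ω)) hcond (hαRI k)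
  -- per-coordinate analysis
  have hcov : ∀ k : Fin K,
      β k * (p k * (1 - p k)) =
        (∫ ω, α k ω * f (fun j => α j ω) ∂μ) - p k * ∫ ω, f (fun j => α j ω) ∂μ := by
    intro k
    rw [← hkey k, hRkint k, hRint]
  refine ⟨?_, ?_⟩
  · -- strictly positive coefficients
    intro k hk
    have hG1inv : ∀ x : Fin K → ℝ,
        f (Function.update (Function.update x k 0) k 1) = f (Function.update x k 1) := by
      intro x; rw [Function.update_idem]
    have hG0inv : ∀ x : Fin K → ℝ,
        f (Function.update (Function.update x k 0) k 0) = f (Function.update x k 0) := by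
      intro x; rw [Function.update_idem]
    have hIG1 : Integrable (fun ω => f (Function.update (fun j => α j ω) k 1)) μ :=
      (gdina_indep_factor μ α hmeas hval hindep k
        (fun x => f (Function.update x k 1)) hG1inv).1
    have hIG0 : Integrable (fun ω => f (Function.update (fun j => α j ω) k 0)) μ :=
      (gdina_indep_factor μ α hmeas hval hindep k
        (fun x => f (Function.update x k 0)) hG0inv).1
    have hprod1 : ∫ ω, α k ω * f (Function.update (fun j => α j ω) k 1) ∂μ
        = p k * ∫ ω, f (Function.update (fun j => α j ω) k 1) ∂μ := by
      have := (gdina_indep_factor μ α hmeas hval hindep k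
        (fun x => f (Function.update x k 1)) hG1inv).2
      rw [hmean k] at this
      exact this
    have hprod0 : ∫ ω, α k ω * f (Function.update (fun j => α j ω) k 0) ∂μ
        = p k * ∫ ω, f (Function.update (fun j => α j ω) k 0) ∂μ := by
      have := (gdina_indep_factor μ α hmeas hval hindep k
        (fun x => f (Function.update x k 0)) hG0inv).2
      rw [hmean k] at this
      exact this
    have hup : ∀ (ω : Ω) (c : ℝ), α k ω = c →
        Function.update (fun j => α j ω) k c = fun j => α j ω := by
      intro ω c hc
      funext j
      by_cases hj : j = k
      · subst hj; rw [Function.update_self, ← hc]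
      · rw [Function.update_of_ne hj]
    have hpt1 : ∀ ω, α k ω * f (fun j => α j ω)
        = α k ω * f (Function.update (fun j => α j ω) k 1) := by
      intro ω
      rcases hval k ω with h | h
      · rw [h]; ring
      · rw [hup ω 1 h]
    have hpt2 : ∀ ω, f (fun j => α j ω)
        = α k ω * f (Function.update (fun j => α j ω) k 1)
          + (f (Function.update (fun j => α j ω) k 0)
            - α k ω * f (Function.update (fun j => α j ω) k 0)) := by
      intro ω
      rcases hval k ω with h | h
      · rw [hup ω 0 h, h]; ring
      · rw [hup ω 1 h, h]; ring
    have hαG1I : Integrable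
        (fun ω => α k ω * f (Function.update (fun j => α j ω) k 1)) μ := by
      have := hIG1.bdd_mul (hmeas k).aestronglyMeasurable (c := 1)
        (Filter.Eventually.of_forall fun ω => by simpa [Real.norm_eq_abs] using hαbd k ω)
      exact this
    have hαG0I : Integrable
        (fun ω => α k ω * f (Function.update (fun j => α j ω) k 0)) μ := by
      have := hIG0.bdd_mul (hmeas k).aestronglyMeasurable (c := 1)
        (Filter.Eventually.of_forall fun ω => by simpa [Real.norm_eq_abs] using hαbd k ω)
      exact this
    have hA : ∫ ω, α k ω * f (fun j => α j ω) ∂μ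
        = p k * ∫ ω, f (Function.update (fun j => α j ω) k 1) ∂μ := by
      rw [show (fun ω => α k ω * f (fun j => α j ω))
          = fun ω => α k ω * f (Function.update (fun j => α j ω) k 1) from funext hpt1]
      exact hprod1
    have hB : ∫ ω, f (fun j => α j ω) ∂μ
        = p k * (∫ ω, f (Function.update (fun j => α j ω) k 1) ∂μ)
          + ((∫ ω, f (Function.update (fun j => α j ω) k 0) ∂μ)
            - p k * ∫ ω, f (Function.update (fun j => α j ω) k 0) ∂μ) := by
      rw [show (fun ω => f (fun j => α j ω)) = fun ω =>
          α k ω * f (Function.update (fun j => α j ω) k 1)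
            + (f (Function.update (fun j => α j ω) k 0)
              - α k ω * f (Function.update (fun j => α j ω) k 0)) from funext hpt2]
      have hsub : Integrable (fun ω => f (Function.update (fun j => α j ω) k 0)
          - α k ω * f (Function.update (fun j => α j ω) k 0)) μ := hIG0.sub hαG0I
      have iadd : ∫ ω, (α k ω * f (Function.update (fun j => α j ω) k 1)
            + (f (Function.update (fun j => α j ω) k 0)
              - α k ω * f (Function.update (fun j => α j ω) k 0))) ∂μ
          = (∫ ω, α k ω * f (Function.update (fun j => α j ω) k 1) ∂μ)
            + ∫ ω, (f (Function.update (fun j => α j ω) k 0)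
              - α k ω * f (Function.update (fun j => α j ω) k 0)) ∂μ :=
        integral_add hαG1I hsub
      have isub : ∫ ω, (f (Function.update (fun j => α j ω) k 0)
            - α k ω * f (Function.update (fun j => α j ω) k 0)) ∂μ
          = (∫ ω, f (Function.update (fun j => α j ω) k 0) ∂μ)
            - ∫ ω, α k ω * f (Function.update (fun j => α j ω) k 0) ∂μ :=
        integral_sub hIG0 hαG0I
      rw [iadd, isub, hprod1, hprod0]
    -- strict positivity of the mean difference
    have hDI : Integrable (fun ω => f (Function.update (fun j => α j ω) k 1)
        - f (Function.update (fun j => α j ω) k 0)) μ := hIG1.sub hIG0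
    have hne : ((hFfin.toFinset).image fun x =>
        f (Function.update x k 1) - f (Function.update x k 0)).Nonempty := by
      refine Finset.Nonempty.image ⟨fun _ => 0, ?_⟩ _
      rw [Set.Finite.mem_toFinset]
      intro i _
      simp
    set c : ℝ := ((hFfin.toFinset).image fun x =>
      f (Function.update x k 1) - f (Function.update x k 0)).min' hne with hcdef
    have hcpos : 0 < c := by
      obtain ⟨x, hx, hxc⟩ := Finset.mem_image.mp (Finset.min'_mem _ hne)
      have hx01 : ∀ i, x i = 0 ∨ x i = 1 := by
        intro i
        have := (Set.Finite.mem_toFinset hFfin).mp hx i (Set.mem_univ i)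
        simpa using this
      rw [hcdef, ← hxc]
      exact sub_pos.mpr (hmono k hk x hx01)
    have hlow : ∀ ω, c ≤ f (Function.update (fun j => α j ω) k 1)
        - f (Function.update (fun j => α j ω) k 0) := by
      intro ω
      exact Finset.min'_le _ _ (Finset.mem_image_of_mem _
        ((Set.Finite.mem_toFinset hFfin).mpr (hVrange ω)))
    have hint : c ≤ ∫ ω, (f (Function.update (fun j => α j ω) k 1)
        - f (Function.update (fun j => α j ω) k 0)) ∂μ := by
      have := integral_mono (integrable_const c) hDI (fun ω => hlow ω)
      simpa using this
    have hsubint := integral_sub hIG1 hIG0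
    obtain ⟨hp0, hp1⟩ := hp k
    have hcvpos : 0 < p k * (1 - p k) := by nlinarith
    have hfinal : (p k * (1 - p k)) * β k = (p k * (1 - p k)) *
        ((∫ ω, f (Function.update (fun j => α j ω) k 1) ∂μ)
          - ∫ ω, f (Function.update (fun j => α j ω) k 0) ∂μ) := by
      have h := hcov k
      rw [hA, hB] at h
      nlinarith [h]
    have hβ : β k = (∫ ω, f (Function.update (fun j => α j ω) k 1) ∂μ)
        - ∫ ω, f (Function.update (fun j => α j ω) k 0) ∂μ :=
      mul_left_cancel₀ hcvpos.ne' hfinal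
    rw [hβ]
    linarith [hint, hcpos, hsubint]
  · -- zero coefficients
    intro k hk
    have hG0inv : ∀ x : Fin K → ℝ,
        f (Function.update (Function.update x k 0) k 0) = f (Function.update x k 0) := by
      intro x; rw [Function.update_idem]
    obtain ⟨hIG0, hprod0⟩ := gdina_indep_factor μ α hmeas hval hindep k
      (fun x => f (Function.update x k 0)) hG0inv
    have hpt : ∀ ω, f (fun j => α j ω) = f (Function.update (fun j => α j ω) k 0) := by
      intro ω
      refine hdep _ _ fun j hj => ?_
      have hjk : j ≠ k := Fin.ne_of_val_ne (by omega)
      rw [Function.update_of_ne hjk]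
    have hpt1 : ∀ ω, α k ω * f (fun j => α j ω)
        = α k ω * f (Function.update (fun j => α j ω) k 0) := fun ω => by rw [hpt ω]
    have j1 : ∫ ω, α k ω * f (fun j => α j ω) ∂μ
        = ∫ ω, α k ω * f (Function.update (fun j => α j ω) k 0) ∂μ :=
      integral_congr_ae (Filter.Eventually.of_forall hpt1)
    have j2 : ∫ ω, f (Function.update (fun j => α j ω) k 0) ∂μ
        = ∫ ω, f (fun j => α j ω) ∂μ :=
      integral_congr_ae (Filter.Eventually.of_forall fun ω => (hpt ω).symm)
    have h1 : ∫ ω, α k ω * f (fun j => α j ω) ∂μ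
        = p k * ∫ ω, f (fun j => α j ω) ∂μ := by
      calc ∫ ω, α k ω * f (fun j => α j ω) ∂μ
          = ∫ ω, α k ω * f (Function.update (fun j => α j ω) k 0) ∂μ := j1
        _ = p k * ∫ ω, f (Function.update (fun j => α j ω) k 0) ∂μ := by
            rw [← hmean k]; exact hprod0
        _ = p k * ∫ ω, f (fun j => α j ω) ∂μ := by rw [j2]
    have h2 := hcov k
    rw [h1] at h2
    have h3 : β k * (p k * (1 - p k)) = 0 := by linarith
    rcases mul_eq_zero.mp h3 with h | h
    · exact h
    · exfalso
      obtain ⟨hp0, hp1⟩ := hp k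
      have : 0 < p k * (1 - p k) := by nlinarith
      linarith
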